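/- Let p∈(5,6) and let ζ be a smooth compactly supported axisymmetric function on ℝ³ (depending only on r=√(x₁²+x₂²) and z=x₃). Define L̃ζ = (4r/(1+r²))∂_rζ + (4(1−r²)/(1+r²)²)ζ. Then ∫_{ℝ³} (L̃ζ)·ζ|ζ|^{p−2} r^{p−3} dx ≥ −8∫_{ℝ³} |ζ|^p r^{p−5} dx. -/

import Mathlib

noncomputable section

open MeasureTheory Real Set
open scoped ENNReal

/-- radial partial derivative of an axisymmetric function -/
def pr (f : ℝ → ℝ → ℝ) (r z : ℝ) : ℝ := deriv (fun s => f s z) r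

/-- integral over `ℝ³` of an axisymmetric function: `2π ∫_ℝ ∫_{r>0} g(r,z) r dr dz`. -/
def axIR (g : ℝ → ℝ → ℝ) : ℝ :=
  2 * π * ∫ z : ℝ, ∫ r in Ioi (0:ℝ), g r z * r

/-- `L̃ζ = (4r/(1+r²)) ∂_r ζ + (4(1−r²)/(1+r²)²) ζ` -/
def tildeL (f : ℝ → ℝ → ℝ) (r z : ℝ) : ℝ :=
  (4 * r / (1 + r ^ 2)) * pr f r z + (4 * (1 - r ^ 2) / (1 + r ^ 2) ^ 2) * f r z

open Filter

section helpers

lemma helper_eq {f : ℝ → ℝ} (hf : Continuous f) {R : ℝ} (hR : 0 < R)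
    (h0 : ∀ r, R ≤ r → f r = 0) :
    ∫ r in Ioi (0:ℝ), f r = ∫ r in Ioc (0:ℝ) R, f r := by
  have h1 : IntegrableOn f (Ioc 0 R) volume :=
    (hf.continuousOn.integrableOn_Icc).mono_set Ioc_subset_Icc_self
  have h2 : IntegrableOn f (Ioi R) volume := by
    have : EqOn f 0 (Ioi R) := fun r hr => h0 r (le_of_lt hr)
    exact (integrableOn_congr_fun this measurableSet_Ioi).mpr (integrableOn_zero)
  rw [← Ioc_union_Ioi_eq_Ioi hR.le, setIntegral_union (Ioc_disjoint_Ioi le_rfl)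
    measurableSet_Ioi h1 h2]
  have h3 : ∫ r in Ioi R, f r = 0 := by
    rw [setIntegral_congr_fun measurableSet_Ioi (fun r hr => h0 r (le_of_lt hr))]
    simp
  rw [h3, add_zero]

lemma helper_int {f : ℝ → ℝ} (hf : Continuous f) {R : ℝ} (hR : 0 < R)
    (h0 : ∀ r, R ≤ r → f r = 0) : IntegrableOn f (Ioi 0) volume := by
  have h1 : IntegrableOn f (Ioc 0 R) volume :=
    (hf.continuousOn.integrableOn_Icc).mono_set Ioc_subset_Icc_self
  have h2 : IntegrableOn f (Ioi R) volume := by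
    have : EqOn f 0 (Ioi R) := fun r hr => h0 r (le_of_lt hr)
    exact (integrableOn_congr_fun this measurableSet_Ioi).mpr (integrableOn_zero)
  exact (h1.union h2).mono_set (by rw [Ioc_union_Ioi_eq_Ioi hR.le])

lemma crpow {q : ℝ} (hq : 0 ≤ q) : Continuous (fun x : ℝ => x ^ q) :=
  continuous_iff_continuousAt.mpr (fun x => Real.continuousAt_rpow_const x q (Or.inr hq))

lemma perz (p : ℝ) (hp5 : 5 < p) (hp6 : p < 6) (g g' : ℝ → ℝ)
    (hgc : Continuous g) (hg'c : Continuous g')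
    (hg : ∀ r, HasDerivAt g (g' r) r)
    {R : ℝ} (hR1 : 1 ≤ R) (hgz : ∀ r, R ≤ r → g r = 0) :
    IntegrableOn (fun r : ℝ => ((4*r/(1+r^2)) * g' r + (4*(1-r^2)/(1+r^2)^2) * g r) * g r
        * |g r| ^ (p-2) * r^(p-3) * r) (Ioi 0) volume ∧
    IntegrableOn (fun r : ℝ => |g r| ^ p * r^(p-5) * r) (Ioi 0) volume ∧
    0 ≤ (∫ r in Ioi (0:ℝ), ((4*r/(1+r^2)) * g' r + (4*(1-r^2)/(1+r^2)^2) * g r) * g r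
          * |g r| ^ (p-2) * r^(p-3) * r)
        + 8 * ∫ r in Ioi (0:ℝ), |g r| ^ p * r^(p-5) * r := by
  have hRpos : (0:ℝ) < R := by linarith
  have hpne : p ≠ 0 := by linarith
  have hp2ne : p - 2 ≠ 0 := by linarith
  have hden : ∀ r : ℝ, (0:ℝ) < 1 + r^2 := fun r => by positivity
  set F₁ : ℝ → ℝ := fun r => ((4*r/(1+r^2)) * g' r + (4*(1-r^2)/(1+r^2)^2) * g r) * g r
      * |g r| ^ (p-2) * r^(p-3) * r with hF₁def
  set F₂ : ℝ → ℝ := fun r => |g r| ^ p * r^(p-5) * r with hF₂def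
  -- continuity
  have habs : ∀ q : ℝ, 0 ≤ q → Continuous (fun r => |g r| ^ q) :=
    fun q hq => (crpow hq).comp hgc.abs
  have hinv : Continuous (fun r : ℝ => (1 + r^2)⁻¹) :=
    (continuous_const.add (continuous_pow 2)).inv₀ (fun r => (hden r).ne')
  have hA : Continuous (fun r : ℝ => 4*r/(1+r^2)) :=
    (continuous_const.mul continuous_id).div (continuous_const.add (continuous_pow 2))
      (fun r => (hden r).ne')
  have hB : Continuous (fun r : ℝ => 4*(1-r^2)/(1+r^2)^2) :=
    (continuous_const.mul (continuous_const.sub (continuous_pow 2))).div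
      ((continuous_const.add (continuous_pow 2)).pow 2) (fun r => by positivity)
  have hF₁c : Continuous F₁ := by
    exact (((((hA.mul hg'c).add (hB.mul hgc)).mul hgc).mul (habs (p-2) (by linarith))).mul
      (crpow (by linarith : (0:ℝ) ≤ p-3))).mul continuous_id
  have hF₂c : Continuous F₂ := by
    exact ((habs p (by linarith)).mul (crpow (by linarith : (0:ℝ) ≤ p-5))).mul continuous_id
  have intF₁ : IntegrableOn F₁ (Ioi 0) volume := by
    refine helper_int hF₁c hRpos (fun r hr => ?_)
    simp [hF₁def, hgz r hr]
  have intF₂ : IntegrableOn F₂ (Ioi 0) volume := by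
    refine helper_int hF₂c hRpos (fun r hr => ?_)
    simp [hF₂def, hgz r hr, Real.zero_rpow hpne]
  refine ⟨intF₁, intF₂, ?_⟩
  -- the derivative function
  set H : ℝ → ℝ := fun r => (4/p) * (r^(p-1) * (1+r^2)⁻¹) * |g r| ^ p with hHdef
  set DD : ℝ → ℝ := fun r => 4/p * ((p-1) * r^(p-2) * (1+r^2)⁻¹
      + r^(p-1) * (-(2*r) * ((1+r^2)^2)⁻¹)) * |g r| ^ p
      + 4/p * (r^(p-1) * (1+r^2)⁻¹) * (p * |g r| ^ (p-2) * g r * g' r) with hDDdef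
  have hHd : ∀ r ∈ Ioi (0:ℝ), HasDerivAt H (DD r) r := by
    intro r hr
    rw [mem_Ioi] at hr
    have ha : HasDerivAt (fun x : ℝ => x^(p-1)) ((p-1)*r^(p-2)) r := by
      have := Real.hasDerivAt_rpow_const (x := r) (p := p-1) (Or.inl hr.ne')
      rwa [show p-1-1 = p-2 by ring] at this
    have hb : HasDerivAt (fun x : ℝ => (1+x^2)⁻¹) (-(2*r) * ((1+r^2)^2)⁻¹) r := by
      have h2 : HasDerivAt (fun x : ℝ => 1+x^2) (2*r) r := by
        simpa using (hasDerivAt_pow 2 r).const_add 1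
      exact (h2.inv (hden r).ne').congr_deriv (by ring)
    have hc := (ha.mul hb).const_mul (4/p)
    have he : HasDerivAt (fun x => |g x| ^ p) (p * |g r| ^ (p-2) * g r * g' r) r := by
      have h3 := (hasDerivAt_abs_rpow (g r) (show 1 < p by linarith)).comp r (hg r)
      exact h3
    have := hc.mul he
    convert this using 1
    all_goals rfl
  have hDDc : Continuous DD := by
    have c1 : Continuous (fun r:ℝ => 4/p * ((p-1) * r^(p-2) * (1+r^2)⁻¹
        + r^(p-1) * (-(2*r) * ((1+r^2)^2)⁻¹))) := by
      refine continuous_const.mul (Continuous.add ?_ ?_)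
      · exact ((continuous_const.mul (crpow (by linarith : (0:ℝ) ≤ p-2))).mul hinv)
      · exact (crpow (by linarith : (0:ℝ) ≤ p-1)).mul
          (((continuous_const.mul continuous_id).neg).mul
            (((continuous_const.add (continuous_pow 2)).pow 2).inv₀ (fun r => pow_ne_zero 2 (hden r).ne')))
    have c2 : Continuous (fun r:ℝ => 4/p * (r^(p-1) * (1+r^2)⁻¹)
        * (p * |g r| ^ (p-2) * g r * g' r)) := by
      exact (continuous_const.mul ((crpow (by linarith : (0:ℝ) ≤ p-1)).mul hinv)).mul
        (((continuous_const.mul (habs (p-2) (by linarith))).mul hgc).mul hg'c)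
    exact (c1.mul (habs p (by linarith))).add c2
  have intDD : IntegrableOn DD (Ioi 0) volume := by
    refine helper_int hDDc hRpos (fun r hr => ?_)
    simp [hDDdef, hgz r hr, Real.zero_rpow hpne]
  have hIBP : ∫ r in Ioi (0:ℝ), DD r = 0 - H 0 := by
    refine integral_Ioi_of_hasDerivAt_of_tendsto ?_ hHd intDD ?_
    · refine Continuous.continuousWithinAt ?_
      exact (continuous_const.mul ((crpow (by linarith : (0:ℝ) ≤ p-1)).mul hinv)).mul
        (habs p (by linarith))
    · refine tendsto_const_nhds.congr' ?_
      filter_upwards [eventually_ge_atTop R] with r hr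
      simp [hHdef, hgz r hr, Real.zero_rpow hpne]
  have hH0 : H 0 = 0 := by
    simp [hHdef, Real.zero_rpow (show p-1 ≠ 0 by linarith)]
  have hDDint0 : ∫ r in Ioi (0:ℝ), DD r = 0 := by rw [hIBP, hH0, sub_zero]
  -- pointwise inequality
  have hpt : ∀ r ∈ Ioi (0:ℝ), DD r ≤ F₁ r + 8 * F₂ r := by
    intro r hr
    rw [mem_Ioi] at hr
    by_cases h0 : g r = 0
    · simp [hDDdef, hF₁def, hF₂def, h0, Real.zero_rpow hpne]
    · have ha : 0 < |g r| := abs_pos.mpr h0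
      have e1 : r ^ (p-3) = r^(p-4) * r := by
        rw [show p-3 = (p-4)+1 by ring, Real.rpow_add hr, Real.rpow_one]
      have e2 : r ^ (p-5) = r^(p-4) / r := by
        rw [show p-5 = (p-4)-1 by ring, Real.rpow_sub hr, Real.rpow_one]
      have e3 : r ^ (p-2) = r^(p-4) * r^(2:ℕ) := by
        rw [show p-2 = (p-4)+((2:ℕ):ℝ) by push_cast; ring, Real.rpow_add hr, Real.rpow_natCast]
      have e4 : r ^ (p-1) = r^(p-4) * r^(3:ℕ) := by
        rw [show p-1 = (p-4)+((3:ℕ):ℝ) by push_cast; ring, Real.rpow_add hr, Real.rpow_natCast]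
      have e5 : |g r| ^ p = |g r|^(p-2) * (g r)^(2:ℕ) := by
        have h5 : |g r| ^ ((p-2)+((2:ℕ):ℝ)) = |g r|^(p-2) * |g r|^((2:ℕ):ℝ) :=
          Real.rpow_add ha _ _
        rw [Real.rpow_natCast, sq_abs] at h5
        rw [← h5]
        norm_num
      simp only [hDDdef, hF₁def, hF₂def, e1, e2, e3, e4, e5]
      rw [← sub_nonneg]
      have hs : 0 < |g r| ^ (p-2) := Real.rpow_pos_of_pos ha _
      have ht : 0 < r ^ (p-4) := Real.rpow_pos_of_pos hr _
      have hgoal : 0 ≤ r^(p-4) * |g r|^(p-2) * (g r)^2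
          * (8*p + (16*p+4)*r^2 + 12*r^4) / (p * (1+r^2)^2) := by positivity
      convert hgoal using 1
      field_simp
      ring
  have hmono := setIntegral_mono_on (g := fun r => F₁ r + 8 * F₂ r) intDD
    (intF₁.add (intF₂.const_mul 8)) measurableSet_Ioi hpt
  rw [hDDint0, integral_add intF₁ (intF₂.const_mul 8), integral_const_mul] at hmono
  exact hmono

end helpers

theorem weighted_lower_order_lower_bound
    (p : ℝ) (hp : p ∈ Set.Ioo (5:ℝ) 6) (ζ : ℝ → ℝ → ℝ)
    (hsmooth : ContDiff ℝ (⊤ : ℕ∞) (fun q : ℝ × ℝ => ζ q.1 q.2))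
    (hsupp : HasCompactSupport (fun q : ℝ × ℝ => ζ q.1 q.2)) :
    (axIR fun r z => tildeL ζ r z * ζ r z * |ζ r z| ^ (p - 2) * r ^ (p - 3)) ≥
      -(8 * (axIR fun r z => |ζ r z| ^ p * r ^ (p - 5))) := by
  obtain ⟨hp5, hp6⟩ := hp
  set Z : ℝ × ℝ → ℝ := fun q => ζ q.1 q.2 with hZdef
  set P : ℝ × ℝ → ℝ := fun q => fderiv ℝ Z q (1, 0) with hPdef
  have hZc : Continuous Z := hsmooth.continuous
  have hPc : Continuous P := (hsmooth.continuous_fderiv (by simp)).clm_apply continuous_const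
  have hderiv : ∀ r z : ℝ, HasDerivAt (fun s => ζ s z) (P (r, z)) r := by
    intro r z
    have h1 : HasDerivAt (fun s : ℝ => ((s, z) : ℝ × ℝ)) ((1:ℝ), (0:ℝ)) r :=
      (hasDerivAt_id r).prodMk (hasDerivAt_const r z)
    have h2 : HasFDerivAt Z (fderiv ℝ Z (r, z)) (r, z) :=
      (hsmooth.differentiable (by simp) (r, z)).hasFDerivAt
    exact h2.comp_hasDerivAt r h1
  have hpr : ∀ r z, pr ζ r z = P (r, z) := fun r z => (hderiv r z).deriv
  obtain ⟨R0, hR0⟩ := hsupp.isBounded.subset_closedBall 0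
  set R : ℝ := max R0 1 + 1 with hRdef
  have hR1 : (1:ℝ) ≤ R := by
    have := le_max_right R0 1; simp only [hRdef]; linarith
  have hRpos : (0:ℝ) < R := by linarith
  have hR0R : R0 < R := by have := le_max_left R0 1; simp only [hRdef]; linarith
  have hzero : ∀ r z : ℝ, R ≤ |r| ∨ R ≤ |z| → ζ r z = 0 := by
    intro r z h
    have hnm : (r, z) ∉ tsupport Z := by
      intro hmem
      have h1 := hR0 hmem
      rw [Metric.mem_closedBall, dist_zero_right, Prod.norm_def] at h1
      simp only [Real.norm_eq_abs] at h1
      rcases h with h | h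
      · exact absurd (le_trans h ((le_max_left _ _).trans h1)) (not_le.mpr hR0R)
      · exact absurd (le_trans h ((le_max_right _ _).trans h1)) (not_le.mpr hR0R)
    exact show Z (r, z) = 0 from image_eq_zero_of_notMem_tsupport hnm
  -- two-variable integrands
  set G₁ : ℝ × ℝ → ℝ := fun q =>
    ((4 * q.1 / (1 + q.1 ^ 2)) * P q + (4 * (1 - q.1 ^ 2) / (1 + q.1 ^ 2) ^ 2) * ζ q.1 q.2)
      * ζ q.1 q.2 * |ζ q.1 q.2| ^ (p - 2) * q.1 ^ (p - 3) * q.1 with hG₁def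
  set G₂ : ℝ × ℝ → ℝ := fun q => |ζ q.1 q.2| ^ p * q.1 ^ (p - 5) * q.1 with hG₂def
  have hden : ∀ x : ℝ, (0:ℝ) < 1 + x ^ 2 := fun x => by positivity
  have hq1 : Continuous (fun q : ℝ × ℝ => q.1) := continuous_fst
  have hG₁c : Continuous G₁ := by
    refine Continuous.mul (Continuous.mul (Continuous.mul (Continuous.mul ?_ hZc) ?_) ?_) hq1
    · refine Continuous.add (Continuous.mul ?_ hPc) (Continuous.mul ?_ hZc)
      · exact (continuous_const.mul hq1).div (continuous_const.add (hq1.pow 2))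
          (fun q => (hden q.1).ne')
      · exact (continuous_const.mul (continuous_const.sub (hq1.pow 2))).div
          ((continuous_const.add (hq1.pow 2)).pow 2) (fun q => by positivity)
    · exact (crpow (by linarith : (0:ℝ) ≤ p - 2)).comp hZc.abs
    · exact (crpow (by linarith : (0:ℝ) ≤ p - 3)).comp hq1
  have hG₂c : Continuous G₂ := by
    refine Continuous.mul (Continuous.mul ?_ ?_) hq1
    · exact (crpow (by linarith : (0:ℝ) ≤ p)).comp hZc.abs
    · exact (crpow (by linarith : (0:ℝ) ≤ p - 5)).comp hq1
  have hG₁z : ∀ r z : ℝ, R ≤ |r| ∨ R ≤ |z| → G₁ (r, z) = 0 := by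
    intro r z h
    simp [hG₁def, hzero r z h]
  have hG₂z : ∀ r z : ℝ, R ≤ |r| ∨ R ≤ |z| → G₂ (r, z) = 0 := by
    intro r z h
    simp [hG₂def, hzero r z h, Real.zero_rpow (show p ≠ 0 by linarith)]
  set I₁ : ℝ → ℝ := fun z => ∫ r in Ioi (0:ℝ), G₁ (r, z) with hI₁def
  set I₂ : ℝ → ℝ := fun z => ∫ r in Ioi (0:ℝ), G₂ (r, z) with hI₂def
  -- per-z facts from perz
  have habsr : ∀ r : ℝ, R ≤ r → R ≤ |r| := fun r hr => le_trans hr (le_abs_self r)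
  have hperz : ∀ z : ℝ,
      IntegrableOn (fun r => G₁ (r, z)) (Ioi 0) volume ∧
      IntegrableOn (fun r => G₂ (r, z)) (Ioi 0) volume ∧
      0 ≤ I₁ z + 8 * I₂ z := by
    intro z
    have h := perz p hp5 hp6 (fun r => ζ r z) (fun r => P (r, z))
      (hZc.comp (continuous_id.prodMk continuous_const))
      (hPc.comp (continuous_id.prodMk continuous_const))
      (fun r => hderiv r z) hR1
      (fun r hr => hzero r z (Or.inl (habsr r hr)))
    exact ⟨h.1, h.2.1, h.2.2⟩
  -- integrability of I₁, I₂ over z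
  have hG₁cz : ∀ z : ℝ, Continuous (fun r => G₁ (r, z)) :=
    fun z => hG₁c.comp (continuous_id.prodMk continuous_const)
  have hG₂cz : ∀ z : ℝ, Continuous (fun r => G₂ (r, z)) :=
    fun z => hG₂c.comp (continuous_id.prodMk continuous_const)
  have hKc : IsCompact (Icc (-R) R ×ˢ Icc (-R) R) := isCompact_Icc.prod isCompact_Icc
  obtain ⟨C₁, hC₁⟩ := hKc.exists_bound_of_continuousOn hG₁c.continuousOn
  obtain ⟨C₂, hC₂⟩ := hKc.exists_bound_of_continuousOn hG₂c.continuousOn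
  have hmem0 : ((0:ℝ), (0:ℝ)) ∈ Icc (-R) R ×ˢ Icc (-R) R := by
    simp only [Set.mem_prod, Set.mem_Icc]
    refine ⟨⟨by linarith, by linarith⟩, by linarith, by linarith⟩
  have hC₁0 : 0 ≤ C₁ := le_trans (norm_nonneg _) (hC₁ _ hmem0)
  have hC₂0 : 0 ≤ C₂ := le_trans (norm_nonneg _) (hC₂ _ hmem0)
  have hbnd : ∀ (G : ℝ × ℝ → ℝ) (C : ℝ), 0 ≤ C →
      (∀ q ∈ Icc (-R) R ×ˢ Icc (-R) R, ‖G q‖ ≤ C) →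
      (∀ r z : ℝ, R ≤ |r| ∨ R ≤ |z| → G (r, z) = 0) →
      ∀ z : ℝ, ∀ r ∈ Ioc (0:ℝ) R, ‖G (r, z)‖ ≤ C := by
    intro G C hC0 hGb hGz z r hr
    rw [mem_Ioc] at hr
    rcases le_or_gt |z| R with hzR | hzR
    · refine hGb (r, z) ?_
      refine ⟨?_, ?_⟩
      · rw [mem_Icc]; constructor <;> [linarith [hr.1]; exact hr.2]
      · rw [mem_Icc]
        exact abs_le.mp hzR
    · rw [hGz r z (Or.inr hzR.le), norm_zero]
      exact hC0
  have hIbound : ∀ (G : ℝ × ℝ → ℝ) (C : ℝ), 0 ≤ C → Continuous G →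
      (∀ q ∈ Icc (-R) R ×ˢ Icc (-R) R, ‖G q‖ ≤ C) →
      (∀ r z : ℝ, R ≤ |r| ∨ R ≤ |z| → G (r, z) = 0) →
      ∀ z : ℝ, ‖∫ r in Ioi (0:ℝ), G (r, z)‖ ≤
        (Icc (-R) R).indicator (fun _ => C * R) z := by
    intro G C hC0 hGc hGb hGz z
    rcases le_or_gt |z| R with hzR | hzR
    · rw [indicator_of_mem (by rw [mem_Icc]; exact abs_le.mp hzR)]
      have heq : ∫ r in Ioi (0:ℝ), G (r, z) = ∫ r in Ioc (0:ℝ) R, G (r, z) :=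
        helper_eq (hGc.comp (continuous_id.prodMk continuous_const)) hRpos
          (fun r hr => hGz r z (Or.inl (habsr r hr)))
      rw [heq]
      have hle := norm_setIntegral_le_of_norm_le_const (μ := volume) (s := Ioc (0:ℝ) R)
        (C := C) (by rw [Real.volume_Ioc]; exact ENNReal.ofReal_lt_top)
        (hbnd G C hC0 hGb hGz z)
      calc ‖∫ r in Ioc (0:ℝ) R, G (r, z)‖ ≤ C * (volume (Ioc (0:ℝ) R)).toReal := hle
        _ = C * R := by rw [Real.volume_Ioc, ENNReal.toReal_ofReal (by linarith)]; ring_nf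
    · rw [indicator_of_notMem (by
        rw [mem_Icc]
        intro ⟨h1, h2⟩
        exact absurd (abs_le.mpr ⟨h1, h2⟩) (not_le.mpr hzR))]
      have hz0 : ∀ r : ℝ, G (r, z) = 0 := fun r => hGz r z (Or.inr hzR.le)
      simp only [hz0, integral_zero, norm_zero]
      exact le_refl 0
  have hindint : ∀ C : ℝ, Integrable ((Icc (-R:ℝ) R).indicator (fun _ => C * R)) volume := by
    intro C
    rw [integrable_indicator_iff measurableSet_Icc]
    exact integrableOn_const measure_Icc_lt_top.ne
  have hI₁m : AEStronglyMeasurable I₁ volume := by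
    have h := StronglyMeasurable.integral_prod_right
      (ν := volume.restrict (Ioi (0:ℝ))) (f := fun z r => G₁ (r, z))
      ((hG₁c.comp continuous_swap).stronglyMeasurable)
    exact h.aestronglyMeasurable
  have hI₂m : AEStronglyMeasurable I₂ volume := by
    have h := StronglyMeasurable.integral_prod_right
      (ν := volume.restrict (Ioi (0:ℝ))) (f := fun z r => G₂ (r, z))
      ((hG₂c.comp continuous_swap).stronglyMeasurable)
    exact h.aestronglyMeasurable
  have hI₁int : Integrable I₁ volume := by
    refine Integrable.mono' (hindint C₁) hI₁m (Filter.Eventually.of_forall ?_)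
    exact hIbound G₁ C₁ hC₁0 hG₁c hC₁ hG₁z
  have hI₂int : Integrable I₂ volume := by
    refine Integrable.mono' (hindint C₂) hI₂m (Filter.Eventually.of_forall ?_)
    exact hIbound G₂ C₂ hC₂0 hG₂c hC₂ hG₂z
  have hnn : 0 ≤ ∫ z : ℝ, (I₁ z + 8 * I₂ z) :=
    integral_nonneg (fun z => (hperz z).2.2)
  rw [integral_add hI₁int (hI₂int.const_mul 8), integral_const_mul] at hnn
  -- rewrite goal
  have hgoal1 : (axIR fun r z => tildeL ζ r z * ζ r z * |ζ r z| ^ (p - 2) * r ^ (p - 3))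
      = 2 * π * ∫ z : ℝ, I₁ z := by
    rw [axIR]
    congr 1
    refine integral_congr_ae (Filter.Eventually.of_forall (fun z => ?_))
    refine integral_congr_ae (Filter.Eventually.of_forall (fun r => ?_))
    simp only [hG₁def, tildeL, hpr]
  have hgoal2 : (axIR fun r z => |ζ r z| ^ p * r ^ (p - 5)) = 2 * π * ∫ z : ℝ, I₂ z := by
    rw [axIR]
  rw [ge_iff_le, hgoal1, hgoal2]
  nlinarith [Real.pi_pos, hnn, mul_nonneg (mul_nonneg (by norm_num : (0:ℝ) ≤ 2)
    Real.pi_pos.le) hnn]
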